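/- arXiv:0809.3754 — 3 statements merged into one kernel-verified Lean document; each statement's English description precedes it below -/
import Mathlib

section
/- Let d ≥ 2 and k ≥ 1 be integers and let σ_d : ℝ/ℤ → ℝ/ℤ be the angle-multiplication map α ↦ d·α (equivalently z ↦ z^d on the unit circle). If K ⊆ ℝ/ℤ is a set such that the diameters diam(σ_d^{ik}(K)) of the iterated images tend to 0 as i → ∞, then there exists i₀ such that diam(σ_d^{i₀k}(K)) = 0, i.e. σ_d^{i₀k}(K) is a subsingleton. -/
open Set Filter Topology Metric

/-!
On `ℝ/ℤ`, multiplication by `n` multiplies distances exactly by `n` as long as the products stay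
at most `1/2`. Hence once `d ^ k * diam σ^{ik}(K) ≤ 1/2`, the diameters `diam σ^{ik}(K)` are
nondecreasing in `i`; a nondecreasing sequence tending to `0` is eventually `≤ 0`.
-/

theorem Filter.Tendsto.eventually_le_of_eventually_le_succ {α : Type*} [Preorder α]
    [TopologicalSpace α] [ClosedIciTopology α] {a : ℕ → α} {l : α}
    (ha : Tendsto a atTop (𝓝 l)) (hsucc : ∀ᶠ i in atTop, a i ≤ a (i + 1)) :
    ∀ᶠ i in atTop, a i ≤ l := by
  obtain ⟨N, hN⟩ := eventually_atTop.1 hsucc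
  refine eventually_atTop.2 ⟨N, fun i hi => ge_of_tendsto ha ?_⟩
  exact eventually_atTop.2 ⟨i, fun j hj => monotoneOn_nat_Ici_of_le_succ hN hi (hi.trans hj) hj⟩

theorem Metric.subsingleton_of_diam_eq_zero {α : Type*} [MetricSpace α] {s : Set α}
    (hs : Bornology.IsBounded s) (h : diam s = 0) : s.Subsingleton := by
  by_contra hns
  exact (diam_pos (not_subsingleton_iff.1 hns) hs).ne' h

namespace AddCircle

variable {p : ℝ}

theorem exists_coe_eq_and_abs_eq_norm (a : AddCircle p) :
    ∃ x : ℝ, (x : AddCircle p) = a ∧ |x| = ‖a‖ := by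
  obtain ⟨x, rfl⟩ := QuotientAddGroup.mk_surjective a
  exact ⟨x - round (p⁻¹ * x) * p, by simp [coe_period], (norm_eq p).symm⟩

variable [Fact (0 < p)]

theorem norm_nsmul_eq_of_mul_norm_le {n : ℕ} {a : AddCircle p} (h : n * ‖a‖ ≤ p / 2) :
    ‖n • a‖ = n * ‖a‖ := by
  have hp : 0 < p := Fact.out
  obtain ⟨x, rfl, hx⟩ := exists_coe_eq_and_abs_eq_norm a
  have hnx : |(n * x : ℝ)| = n * ‖(x : AddCircle p)‖ := by
    rw [abs_mul, Nat.abs_cast, hx]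
  rw [← QuotientAddGroup.mk_nsmul, nsmul_eq_mul, ← hnx, norm_coe_eq_abs_iff p hp.ne',
    abs_of_pos hp, hnx]
  exact h

theorem dist_nsmul_eq_of_mul_dist_le {n : ℕ} {a b : AddCircle p} (h : n * dist a b ≤ p / 2) :
    dist (n • a) (n • b) = n * dist a b := by
  simp only [dist_eq_norm] at h ⊢
  rw [← nsmul_sub, norm_nsmul_eq_of_mul_norm_le h]

theorem mul_diam_le_diam_image_nsmul {n : ℕ} {s : Set (AddCircle p)} (h : n * diam s ≤ p / 2) :
    n * diam s ≤ diam ((n • ·) '' s) := by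
  rcases Nat.eq_zero_or_pos n with rfl | hn
  · simpa using diam_nonneg
  have hn' : (0 : ℝ) < n := Nat.cast_pos.2 hn
  rw [mul_comm, ← le_div_iff₀ hn']
  refine diam_le_of_forall_dist_le (by positivity) fun a ha b hb => ?_
  have hab : n * dist a b ≤ p / 2 :=
    (mul_le_mul_of_nonneg_left (dist_le_diam_of_mem isBounded_of_compactSpace ha hb)
      hn'.le).trans h
  rw [le_div_iff₀ hn', mul_comm, ← dist_nsmul_eq_of_mul_dist_le hab]
  exact dist_le_diam_of_mem isBounded_of_compactSpace (mem_image_of_mem _ ha)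
    (mem_image_of_mem _ hb)

end AddCircle

theorem expansivity_of_sigma_d_general (d k : ℕ) (hd : 2 ≤ d)
    (σ : AddCircle (1 : ℝ) → AddCircle (1 : ℝ)) (hσ : σ = fun α => d • α)
    (K : Set (AddCircle (1 : ℝ)))
    (hdiam : Tendsto (fun i : ℕ => Metric.diam (σ^[i * k] '' K)) atTop (𝓝 0)) :
    ∃ i₀ : ℕ, Metric.diam (σ^[i₀ * k] '' K) = 0 ∧ (σ^[i₀ * k] '' K).Subsingleton := by
  have hdk : 1 ≤ d ^ k := Nat.one_le_pow _ _ (by omega)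
  have hstep : ∀ i, σ^[(i + 1) * k] '' K = ((d ^ k) • ·) '' (σ^[i * k] '' K) := fun i => by
    rw [image_image, add_one_mul, add_comm (i * k) k, Function.iterate_add, hσ, smul_iterate d k]
    rfl
  have hsmall : ∀ᶠ i in atTop, ((d ^ k : ℕ) : ℝ) * diam (σ^[i * k] '' K) ≤ 1 / 2 := by
    have h := hdiam.const_mul ((d ^ k : ℕ) : ℝ)
    rw [mul_zero] at h
    exact h.eventually (eventually_le_nhds one_half_pos)
  have hgrow : ∀ᶠ i in atTop, diam (σ^[i * k] '' K) ≤ diam (σ^[(i + 1) * k] '' K) :=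
    hsmall.mono fun i hi => by
      rw [hstep]
      exact (le_mul_of_one_le_left diam_nonneg (by exact_mod_cast hdk)).trans
        (AddCircle.mul_diam_le_diam_image_nsmul hi)
  obtain ⟨i₀, hi₀⟩ := (hdiam.eventually_le_of_eventually_le_succ hgrow).exists
  have hzero : diam (σ^[i₀ * k] '' K) = 0 := le_antisymm hi₀ diam_nonneg
  exact ⟨i₀, hzero, subsingleton_of_diam_eq_zero isBounded_of_compactSpace hzero⟩

/-- If the diameters of the images of a set `K ⊆ ℝ/ℤ` under the iterates
`σ_d^{ik}` of the angle-`d`-tupling map tend to `0`, then some image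
`σ_d^{i₀k}(K)` already has diameter `0`, i.e. is a subsingleton. -/
theorem expansivity_of_sigma_d (d k : ℕ) (hd : 2 ≤ d) (hk : 1 ≤ k)
    (σ : AddCircle (1 : ℝ) → AddCircle (1 : ℝ)) (hσ : σ = fun α => d • α)
    (K : Set (AddCircle (1 : ℝ)))
    (hdiam : Tendsto (fun i : ℕ => Metric.diam (σ^[i * k] '' K)) atTop (𝓝 0)) :
    ∃ i₀ : ℕ, Metric.diam (σ^[i₀ * k] '' K) = 0 ∧ (σ^[i₀ * k] '' K).Subsingleton :=
  expansivity_of_sigma_d_general d k hd σ hσ K hdiam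
end

section
/- Let Q ⊆ ℂ be an unshielded continuum and Ψ a Riemann map for its basin of infinity as in the context. Then there exists a partition 𝒟 of Q such that: (i) every element of 𝒟 is a closed connected subset of Q; (ii) 𝒟 is upper semi-continuous; (iii) every impression Imp(α), α ∈ ℝ/ℤ, is contained in a single element of 𝒟; and (iv) 𝒟 is finest with respect to (ii)–(iii): for every upper semi-continuous partition 𝒟' of Q in which each impression is contained in a single element, every element of 𝒟 is contained in an element of 𝒟'. -/
open Set Filter Topology Metric

noncomputable section


/-- The point `e^{2πiα}` on the unit circle corresponding to an angle `α ∈ ℝ/ℤ`. -/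
def circlePoint (α : AddCircle (1 : ℝ)) : ℂ := (AddCircle.toCircle α : ℂ)

/-- The basin of infinity of a compact set `Q ⊆ ℂ`: the union of the unbounded
connected components of `ℂ ∖ Q` (for `Q` a continuum there is exactly one). -/
def basin (Q : Set ℂ) : Set ℂ :=
  {z | z ∉ Q ∧ ¬ Bornology.IsBounded (connectedComponentIn Qᶜ z)}

/-- `Q` is an unshielded continuum: a compact connected nonempty subset of `ℂ`
which coincides with the boundary of its basin of infinity. -/
def Unshielded (Q : Set ℂ) : Prop :=
  IsCompact Q ∧ IsConnected Q ∧ Q = frontier (basin Q)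

/-- `Ψ` is a Riemann map for the basin of infinity of `Q`: a holomorphic bijection
from `{z : |z| > 1}` onto the basin of infinity. -/
def RiemannMap (Q : Set ℂ) (Ψ : ℂ → ℂ) : Prop :=
  DifferentiableOn ℂ Ψ {z | 1 < ‖z‖} ∧
  Set.BijOn Ψ {z | 1 < ‖z‖} (basin Q)

/-- The impression of the external angle `α`. -/
def impression (Ψ : ℂ → ℂ) (α : AddCircle (1 : ℝ)) : Set ℂ :=
  {w | ∃ z : ℕ → ℂ, (∀ n, 1 < ‖z n‖) ∧
        Tendsto z atTop (𝓝 (circlePoint α)) ∧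
        Tendsto (fun n => Ψ (z n)) atTop (𝓝 w)}

/-- The external ray of angle `α`. -/
def extRay (Ψ : ℂ → ℂ) (α : AddCircle (1 : ℝ)) : Set ℂ :=
  Ψ '' {z | ∃ r : ℝ, 1 < r ∧ z = (r : ℂ) * circlePoint α}

/-- The principal set of the external angle `α`. -/
def principalSet (Ψ : ℂ → ℂ) (α : AddCircle (1 : ℝ)) : Set ℂ :=
  closure (extRay Ψ α) \ extRay Ψ α

/-- A closed equivalence relation (its graph, within `Q × Q`, is closed) such that
every impression is contained in a single equivalence class. -/
structure IsClosedEquivRespImp (Q : Set ℂ) (Ψ : ℂ → ℂ) (r : ℂ → ℂ → Prop) : Prop where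
  equivalence : Equivalence r
  closedGraph : IsClosed {p : ℂ × ℂ | p.1 ∈ Q ∧ p.2 ∈ Q ∧ r p.1 p.2}
  resp : ∀ α : AddCircle (1 : ℝ), ∀ x ∈ impression Ψ α, ∀ y ∈ impression Ψ α, r x y

/-- The relation `≈₀`: the intersection of all closed equivalence relations on `Q`
in which every impression is contained in a single class. -/
def finestRel (Q : Set ℂ) (Ψ : ℂ → ℂ) (x y : ℂ) : Prop :=
  ∀ r : ℂ → ℂ → Prop, IsClosedEquivRespImp Q Ψ r → r x y

/-- The partition `𝒟` of `Q` whose elements are the connected components of the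
`≈₀`-classes; its elements are the fibers of the finest monotone map of `Q`
onto a locally connected continuum. -/
def finestPartition (Q : Set ℂ) (Ψ : ℂ → ℂ) : Set (Set ℂ) :=
  {D | ∃ x ∈ Q, D = connectedComponentIn {y ∈ Q | finestRel Q Ψ x y} x}

/-- A ray-compactum in `Q`: a compact subset of `Q` together with a closed set of
angles whose principal sets it contains and in the union of whose impressions
it is contained. -/
structure RayCompactum (Q : Set ℂ) (Ψ : ℂ → ℂ) where
  carrier : Set ℂ
  angles : Set (AddCircle (1 : ℝ))
  carrier_subset : carrier ⊆ Q
  isCompact_carrier : IsCompact carrier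
  isClosed_angles : IsClosed angles
  principal_subset : ∀ θ ∈ angles, principalSet Ψ θ ⊆ carrier
  subset_impressions : carrier ⊆ ⋃ θ ∈ angles, impression Ψ θ

/-- `C̃ = C ∪ ⋃_{θ ∈ Θ(C)} R_θ`. -/
def RayCompactum.tilde {Q : Set ℂ} {Ψ : ℂ → ℂ} (C : RayCompactum Q Ψ) : Set ℂ :=
  C.carrier ∪ ⋃ θ ∈ C.angles, extRay Ψ θ

/-- A ray-compactum `C` ray-separates the sets `A` and `B`. -/
def RaySeparates {Q : Set ℂ} {Ψ : ℂ → ℂ} (C : RayCompactum Q Ψ) (A B : Set ℂ) : Prop :=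
  C.carrier ∩ (A ∪ B) = ∅ ∧
  ∀ z ∈ closure (basin Q) \ C.tilde,
    ¬ ((connectedComponentIn (closure (basin Q) \ C.tilde) z ∩ A).Nonempty ∧
       (connectedComponentIn (closure (basin Q) \ C.tilde) z ∩ B).Nonempty)

/-- A ray-compactum `C` ray-separates a set `X` if it ray-separates some
pair of (distinct) points of `X`. -/
def RaySeparatesSet {Q : Set ℂ} {Ψ : ℂ → ℂ} (C : RayCompactum Q Ψ) (X : Set ℂ) : Prop :=
  ∃ x ∈ X, ∃ y ∈ X, x ≠ y ∧ RaySeparates C {x} {y}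

/-- A well-slicing family for a continuum `X ⊆ Q`. -/
structure IsWellSlicing {Q : Set ℂ} {Ψ : ℂ → ℂ}
    (𝒞 : Set (RayCompactum Q Ψ)) (X : Set ℂ) : Prop where
  nontrivial : ∃ C₁ ∈ 𝒞, ∃ C₂ ∈ 𝒞, C₁ ≠ C₂
  pairwiseDisjoint : ∀ C₁ ∈ 𝒞, ∀ C₂ ∈ 𝒞, C₁ ≠ C₂ → Disjoint C₁.carrier C₂.carrier
  separates : ∀ C ∈ 𝒞, RaySeparatesSet C X
  middle : ∀ C₁ ∈ 𝒞, ∀ C₂ ∈ 𝒞, C₁ ≠ C₂ → ∃ C₃ ∈ 𝒞, RaySeparates C₃ C₁.carrier C₂.carrier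

/-- An upper semi-continuous partition `𝒟` of `Q` in which every impression is
contained in a single element: the elements are nonempty, pairwise disjoint
subsets of `Q` covering `Q`; the associated equivalence relation has closed
graph in `Q × Q`; and each impression is contained in one element. -/
def IsUSCImpPartition (Q : Set ℂ) (Ψ : ℂ → ℂ) (𝒟 : Set (Set ℂ)) : Prop :=
  (∀ D ∈ 𝒟, D.Nonempty ∧ D ⊆ Q) ∧ ⋃₀ 𝒟 = Q ∧
  (∀ D₁ ∈ 𝒟, ∀ D₂ ∈ 𝒟, D₁ ≠ D₂ → Disjoint D₁ D₂) ∧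
  IsClosed {p : ↥Q × ↥Q | ∃ D ∈ 𝒟, (p.1 : ℂ) ∈ D ∧ (p.2 : ℂ) ∈ D} ∧
  ∀ α : AddCircle (1 : ℝ), ∃ D ∈ 𝒟, impression Ψ α ⊆ D


/-!
The relation `≈₀` is itself a closed equivalence relation whose classes contain the impressions,
while every upper semi-continuous partition whose elements contain the impressions defines such a
relation; hence the components of the `≈₀`-classes refine every such partition. Their
decomposition is upper semi-continuous because the classes of a closed relation on a compactum vary
upper semi-continuously, and two components of a compact class are separated by a clopen
partition of it. Each impression lies in one component because it is connected: it is the nested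
intersection of the continua `closure (Ψ '' S)`, `S` running through shrinking polar rectangles at
the angle, which are compact because `Ψ` is bounded near the unit circle.
-/

section Topology

variable {X Y : Type*} [TopologicalSpace X] [TopologicalSpace Y]

theorem IsPreconnected.image_subset_Iio_or_Ioi {α : Type*} [LinearOrder α] [TopologicalSpace α]
    [OrderClosedTopology α] {s : Set X} (hs : IsPreconnected s) {f : X → α}
    (hf : ContinuousOn f s) {a : α} (ha : ∀ x ∈ s, f x ≠ a) :
    f '' s ⊆ Iio a ∨ f '' s ⊆ Ioi a :=
  (hs.image f hf).subset_or_subset isOpen_Iio isOpen_Ioi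
    (disjoint_left.2 fun _ h₁ h₂ => lt_asymm h₁ h₂)
    (by rintro _ ⟨x, hx, rfl⟩; exact (ha x hx).lt_or_gt)

theorem isPreconnected_iInter_of_directed [T2Space X] {ι : Type*} [Nonempty ι]
    {K : ι → Set X} (hdir : Directed (· ⊇ ·) K) (hc : ∀ i, IsCompact (K i))
    (hK : ∀ i, IsPreconnected (K i)) : IsPreconnected (⋂ i, K i) := by
  have hclosed : IsClosed (⋂ i, K i) := isClosed_iInter fun i => (hc i).isClosed
  rw [isPreconnected_iff_subset_of_fully_disjoint_closed hclosed]
  intro a b ha hb hab hdisj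
  have hcpt : IsCompact (⋂ i, K i) := (hc (Classical.arbitrary ι)).of_isClosed_subset hclosed
    (iInter_subset _ _)
  obtain ⟨u, v, hu, hv, hau, hbv, huv⟩ := SeparatedNhds.of_isCompact_isCompact
    (hcpt.inter_right ha) (hcpt.inter_right hb) (hdisj.mono inter_subset_right inter_subset_right)
  have hsub : ⋂ i, K i ⊆ u ∪ v := fun x hx =>
    (hab hx).imp (fun h => hau ⟨hx, h⟩) (fun h => hbv ⟨hx, h⟩)
  obtain ⟨i, hi⟩ := exists_subset_nhds_of_isCompact hdir hc
    fun x hx => (hu.union hv).mem_nhds (hsub hx)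
  refine ((hK i).subset_or_subset hu hv huv hi).imp (fun hiu x hx => ?_) (fun hiv x hx => ?_)
  · exact (hab hx).resolve_right fun hxb =>
      disjoint_left.1 huv (hiu (iInter_subset K i hx)) (hbv ⟨hx, hxb⟩)
  · exact (hab hx).resolve_left fun hxa =>
      disjoint_left.1 huv (hau ⟨hx, hxa⟩) (hiv (iInter_subset K i hx))

theorem IsClosed.connectedComponentIn {F : Set X} (hF : IsClosed F) (x : X) :
    IsClosed (connectedComponentIn F x) := by
  by_cases hx : x ∈ F
  · refine closure_subset_iff_isClosed.1 <|
      isPreconnected_connectedComponentIn.closure.subset_connectedComponentIn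
        (subset_closure (mem_connectedComponentIn hx)) ?_
    exact closure_minimal (connectedComponentIn_subset F x) hF
  · rw [connectedComponentIn_eq_empty hx]
    exact isClosed_empty

theorem IsCompact.exists_isOpen_separation [T2Space X] {K : Set X} (hK : IsCompact K) {x y : X}
    (hx : x ∈ K) (hy : y ∈ K) (hxy : y ∉ connectedComponentIn K x) :
    ∃ u v, IsOpen u ∧ IsOpen v ∧ Disjoint u v ∧ K ⊆ u ∪ v ∧ x ∈ u ∧ y ∈ v := by
  have := isCompact_iff_compactSpace.mp hK
  have hy' : (⟨y, hy⟩ : K) ∉ connectedComponent ⟨x, hx⟩ := fun h =>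
    hxy (connectedComponentIn_eq_image hx ▸ ⟨_, h, rfl⟩)
  rw [connectedComponent_eq_iInter_isClopen, mem_iInter] at hy'
  obtain ⟨⟨s, hs, hxs⟩, hys⟩ := not_forall.1 hy'
  obtain ⟨u, v, hu, hv, hsu, hsv, huv⟩ := SeparatedNhds.of_isCompact_isCompact
    (hs.isClosed.isCompact.image continuous_subtype_val)
    (hs.compl.isClosed.isCompact.image continuous_subtype_val)
    ((disjoint_image_iff Subtype.val_injective).2 disjoint_compl_right)
  refine ⟨u, v, hu, hv, huv, fun z hz => ?_, hsu ⟨_, hxs, rfl⟩, hsv ⟨_, hys, rfl⟩⟩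
  by_cases hzs : (⟨z, hz⟩ : K) ∈ s
  exacts [Or.inl (hsu ⟨_, hzs, rfl⟩), Or.inr (hsv ⟨_, hzs, rfl⟩)]

theorem IsCompact.eventually_setOf_mem_subset [T2Space X] {G : Set (X × Y)} (hG : IsCompact G)
    {W : Set Y} (hW : IsOpen W) {x : X} (hx : {y | (x, y) ∈ G} ⊆ W) :
    ∀ᶠ x' in 𝓝 x, {y | (x', y) ∈ G} ⊆ W := by
  have hB : IsClosed (Prod.fst '' (G ∩ univ ×ˢ Wᶜ)) :=
    ((hG.inter_right (isClosed_univ.prod hW.isClosed_compl)).image continuous_fst).isClosed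
  have hxB : x ∉ Prod.fst '' (G ∩ univ ×ˢ Wᶜ) := by
    rintro ⟨⟨_, y⟩, ⟨hxy, -, hyW⟩, rfl⟩
    exact hyW (hx hxy)
  filter_upwards [hB.isOpen_compl.mem_nhds hxB] with x' hx' y hy
  by_contra hyW
  exact hx' ⟨(x', y), ⟨hy, trivial, hyW⟩, rfl⟩

theorem IsCompact.isClosed_setOf_mem_connectedComponentIn [T2Space X] {G : Set (X × X)}
    (hG : IsCompact G) :
    IsClosed {p : X × X | p.2 ∈ connectedComponentIn {y | (p.1, y) ∈ G} p.1} := by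
  refine isOpen_compl_iff.1 (isOpen_iff_mem_nhds.2 fun ⟨x, y⟩ hxy => ?_)
  have hdiag : IsClosed {p : X × X | (p.1, p.1) ∈ G} :=
    hG.isClosed.preimage (continuous_fst.prodMk continuous_fst)
  by_cases hxx : (x, x) ∈ G
  swap
  · filter_upwards [hdiag.isOpen_compl.mem_nhds hxx] with p hp hmem
    exact hp (connectedComponentIn_nonempty_iff (F := {y | (p.1, y) ∈ G}).1 ⟨p.2, hmem⟩)
  by_cases hxy' : (x, y) ∈ G
  swap
  · filter_upwards [hG.isClosed.isOpen_compl.mem_nhds hxy'] with p hp hmem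
    exact hp (connectedComponentIn_subset _ p.1 hmem)
  have hfib : IsCompact {y | (x, y) ∈ G} :=
    (hG.image continuous_snd).of_isClosed_subset
      (hG.isClosed.preimage (Continuous.prodMk_right x)) fun z hz => ⟨(x, z), hz, rfl⟩
  obtain ⟨u, v, hu, hv, huv, hsub, hxu, hyv⟩ := hfib.exists_isOpen_separation hxx hxy' hxy
  filter_upwards [(continuous_fst.tendsto (x, y)).eventually (hG.eventually_setOf_mem_subset
      (hu.union hv) hsub), (continuous_fst.tendsto (x, y)).eventually (hu.mem_nhds hxu),
    (continuous_snd.tendsto (x, y)).eventually (hv.mem_nhds hyv)] with p hpG hpu hpv hmem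
  have hcomp : connectedComponentIn {y | (p.1, y) ∈ G} p.1 ⊆ u :=
    isPreconnected_connectedComponentIn.subset_left_of_subset_union hu hv huv
      ((connectedComponentIn_subset _ _).trans hpG)
      ⟨p.1, mem_connectedComponentIn (connectedComponentIn_nonempty_iff.1 ⟨_, hmem⟩), hpu⟩
  exact disjoint_left.1 huv (hcomp hmem) hpv

theorem connectedComponentIn_setOf_rel_eq {K : Set X} {r : X → X → Prop} (hr : Equivalence r)
    {x y : X} (hy : y ∈ connectedComponentIn {z ∈ K | r x z} x) :
    connectedComponentIn {z ∈ K | r y z} y = connectedComponentIn {z ∈ K | r x z} x := by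
  have hxy : r x y := (connectedComponentIn_subset _ _ hy).2
  have hclass : {z ∈ K | r y z} = {z ∈ K | r x z} := by
    ext z
    exact and_congr_right fun _ => ⟨hr.trans hxy, hr.trans (hr.symm hxy)⟩
  rw [hclass, connectedComponentIn_eq hy]

end Topology

section Partitions

variable {Q : Set ℂ} {Ψ : ℂ → ℂ}

theorem IsUSCImpPartition.eq_of_mem {𝒟 : Set (Set ℂ)} (h𝒟 : IsUSCImpPartition Q Ψ 𝒟)
    {D₁ D₂ : Set ℂ} (hD₁ : D₁ ∈ 𝒟) (hD₂ : D₂ ∈ 𝒟) {x : ℂ} (hx₁ : x ∈ D₁) (hx₂ : x ∈ D₂) :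
    D₁ = D₂ := by
  by_contra hne
  exact disjoint_left.1 (h𝒟.2.2.1 D₁ hD₁ D₂ hD₂ hne) hx₁ hx₂

theorem IsUSCImpPartition.isClosedEquivRespImp (hQ : IsClosed Q) {𝒟 : Set (Set ℂ)}
    (h𝒟 : IsUSCImpPartition Q Ψ 𝒟) :
    IsClosedEquivRespImp Q Ψ (fun a b => a = b ∨ ∃ D ∈ 𝒟, a ∈ D ∧ b ∈ D) where
  equivalence := by
    refine ⟨fun _ => Or.inl rfl, ?_, ?_⟩
    · rintro _ _ (rfl | ⟨D, hD, ha, hb⟩)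
      exacts [Or.inl rfl, Or.inr ⟨D, hD, hb, ha⟩]
    · rintro _ _ _ (rfl | ⟨D₁, hD₁, ha, hb₁⟩) (rfl | ⟨D₂, hD₂, hb₂, hc⟩)
      exacts [Or.inl rfl, Or.inr ⟨D₂, hD₂, hb₂, hc⟩, Or.inr ⟨D₁, hD₁, ha, hb₁⟩,
        Or.inr ⟨D₁, hD₁, ha, h𝒟.eq_of_mem hD₂ hD₁ hb₂ hb₁ ▸ hc⟩]
  closedGraph := by
    have hgraph : {p : ℂ × ℂ | p.1 ∈ Q ∧ p.2 ∈ Q ∧ (p.1 = p.2 ∨ ∃ D ∈ 𝒟, p.1 ∈ D ∧ p.2 ∈ D)} =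
        Prod.map Subtype.val Subtype.val ''
          {p : ↥Q × ↥Q | ∃ D ∈ 𝒟, (p.1 : ℂ) ∈ D ∧ (p.2 : ℂ) ∈ D} := by
      ext ⟨a, b⟩
      constructor
      · rintro ⟨ha, hb, hab | hD⟩
        · obtain ⟨D, hD, haD⟩ := h𝒟.2.1.symm ▸ ha
          have hbD : b ∈ D := (show a = b from hab) ▸ haD
          exact ⟨(⟨a, ha⟩, ⟨b, hb⟩), ⟨D, hD, haD, hbD⟩, rfl⟩
        · exact ⟨(⟨a, ha⟩, ⟨b, hb⟩), hD, rfl⟩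
      · rintro ⟨⟨a', b'⟩, hD, h⟩
        cases h
        exact ⟨a'.2, b'.2, Or.inr hD⟩
    rw [hgraph]
    exact (hQ.isClosedEmbedding_subtypeVal.prodMap hQ.isClosedEmbedding_subtypeVal).isClosedMap _
      h𝒟.2.2.2.1
  resp α x hx y hy := by
    obtain ⟨D, hD, himp⟩ := h𝒟.2.2.2.2 α
    exact Or.inr ⟨D, hD, himp hx, himp hy⟩

theorem equivalence_finestRel : Equivalence (finestRel Q Ψ) :=
  ⟨fun _ _ hr => hr.equivalence.refl _, fun h r hr => hr.equivalence.symm (h r hr),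
    fun h₁ h₂ r hr => hr.equivalence.trans (h₁ r hr) (h₂ r hr)⟩

theorem isClosed_finestRel (hQ : IsClosed Q) :
    IsClosed {p : ℂ × ℂ | p.1 ∈ Q ∧ p.2 ∈ Q ∧ finestRel Q Ψ p.1 p.2} := by
  have hgraph : {p : ℂ × ℂ | p.1 ∈ Q ∧ p.2 ∈ Q ∧ finestRel Q Ψ p.1 p.2} =
      Q ×ˢ Q ∩ ⋂ (r : ℂ → ℂ → Prop) (_ : IsClosedEquivRespImp Q Ψ r),
        {p : ℂ × ℂ | p.1 ∈ Q ∧ p.2 ∈ Q ∧ r p.1 p.2} := by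
    ext p
    simp only [finestRel, mem_inter_iff, mem_prod, mem_iInter]
    exact ⟨fun ⟨h₁, h₂, h⟩ => ⟨⟨h₁, h₂⟩, fun r hr => ⟨h₁, h₂, h r hr⟩⟩,
      fun ⟨⟨h₁, h₂⟩, h⟩ => ⟨h₁, h₂, fun r hr => (h r hr).2.2⟩⟩
  rw [hgraph]
  exact (hQ.prod hQ).inter (isClosed_biInter fun r hr => hr.closedGraph)

theorem mem_finestPartition_iff_exists {a b : ℂ} :
    (∃ D ∈ finestPartition Q Ψ, a ∈ D ∧ b ∈ D) ↔
      a ∈ Q ∧ b ∈ connectedComponentIn {y ∈ Q | finestRel Q Ψ a y} a := by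
  constructor
  · rintro ⟨_, ⟨x, -, rfl⟩, ha, hb⟩
    rw [connectedComponentIn_setOf_rel_eq equivalence_finestRel ha]
    exact ⟨(connectedComponentIn_subset _ _ ha).1, hb⟩
  · rintro ⟨ha, hb⟩
    exact ⟨_, ⟨a, ha, rfl⟩, mem_connectedComponentIn ⟨ha, equivalence_finestRel.refl a⟩, hb⟩

theorem isClosed_of_mem_finestPartition (hQ : IsClosed Q) {D : Set ℂ}
    (hD : D ∈ finestPartition Q Ψ) : IsClosed D := by
  obtain ⟨x, hx, rfl⟩ := hD
  refine IsClosed.connectedComponentIn ?_ x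
  simpa [hx] using (isClosed_finestRel hQ).preimage (Continuous.prodMk_right (X := ℂ) x)

theorem isConnected_of_mem_finestPartition {D : Set ℂ} (hD : D ∈ finestPartition Q Ψ) :
    IsConnected D := by
  obtain ⟨x, hx, rfl⟩ := hD
  exact isConnected_connectedComponentIn_iff.2 ⟨hx, equivalence_finestRel.refl x⟩

theorem isUSCImpPartition_finestPartition (hQ : IsCompact Q) (hne : Q.Nonempty)
    (himp : ∀ α, impression Ψ α ⊆ Q) (hconn : ∀ α, IsPreconnected (impression Ψ α)) :
    IsUSCImpPartition Q Ψ (finestPartition Q Ψ) := by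
  have hsub : ∀ D ∈ finestPartition Q Ψ, D.Nonempty ∧ D ⊆ Q := by
    rintro _ ⟨x, hx, rfl⟩
    exact ⟨(isConnected_of_mem_finestPartition ⟨x, hx, rfl⟩).nonempty,
      (connectedComponentIn_subset _ _).trans (sep_subset _ _)⟩
  refine ⟨hsub, ?_, ?_, ?_, fun α => ?_⟩
  · refine (sUnion_subset fun D hD => (hsub D hD).2).antisymm fun x hx => ?_
    obtain ⟨D, hD, -, hxD⟩ := mem_finestPartition_iff_exists.2
      ⟨hx, mem_connectedComponentIn ⟨hx, equivalence_finestRel.refl x⟩⟩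
    exact ⟨D, hD, hxD⟩
  · rintro _ ⟨x, -, rfl⟩ _ ⟨x', -, rfl⟩ hne
    refine disjoint_left.2 fun z hz hz' => hne ?_
    rw [← connectedComponentIn_setOf_rel_eq equivalence_finestRel hz,
      connectedComponentIn_setOf_rel_eq equivalence_finestRel hz']
  · have hG : IsCompact {p : ℂ × ℂ | p.1 ∈ Q ∧ p.2 ∈ Q ∧ finestRel Q Ψ p.1 p.2} :=
      (hQ.prod hQ).of_isClosed_subset (isClosed_finestRel hQ.isClosed) fun p hp => ⟨hp.1, hp.2.1⟩
    convert hG.isClosed_setOf_mem_connectedComponentIn.preimage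
      (continuous_subtype_val.prodMap continuous_subtype_val) using 1
    ext ⟨⟨a, ha⟩, ⟨b, hb⟩⟩
    simp [mem_finestPartition_iff_exists]
  · rcases (impression Ψ α).eq_empty_or_nonempty with h | ⟨x, hx⟩
    · obtain ⟨q, hq⟩ := hne
      exact ⟨_, ⟨q, hq, rfl⟩, h ▸ empty_subset _⟩
    · exact ⟨_, ⟨x, himp α hx, rfl⟩, (hconn α).subset_connectedComponentIn hx
        fun y hy => ⟨himp α hy, fun r hr => hr.resp α x hx y hy⟩⟩

theorem finestPartition_refines (hQ : IsClosed Q) {𝒟 : Set (Set ℂ)}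
    (h𝒟 : IsUSCImpPartition Q Ψ 𝒟) : ∀ D ∈ finestPartition Q Ψ, ∃ D' ∈ 𝒟, D ⊆ D' := by
  rintro _ ⟨x, hx, rfl⟩
  obtain ⟨D', hD', hxD'⟩ := h𝒟.2.1.symm ▸ hx
  refine ⟨D', hD', fun y hy => ?_⟩
  rcases (connectedComponentIn_subset _ _ hy).2 _ (h𝒟.isClosedEquivRespImp hQ) with
    rfl | ⟨D'', hD'', hxD'', hyD''⟩
  exacts [hxD', h𝒟.eq_of_mem hD'' hD' hxD'' hxD' ▸ hyD'']

end Partitions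

theorem isPreconnected_setOf_norm_mem {I : Set ℝ} (hI : IsPreconnected I)
    (hI₀ : ∀ r ∈ I, 0 ≤ r) : IsPreconnected {z : ℂ | ‖z‖ ∈ I} := by
  have hpolar : {z : ℂ | ‖z‖ ∈ I} =
      (fun p : ℝ × ℝ => (p.1 : ℂ) * Complex.exp (p.2 * Complex.I)) '' (I ×ˢ univ) := by
    ext z
    refine ⟨fun hz => ⟨(‖z‖, Complex.arg z), ⟨hz, trivial⟩, Complex.norm_mul_exp_arg_mul_I z⟩, ?_⟩
    rintro ⟨⟨r, θ⟩, ⟨hr, -⟩, rfl⟩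
    simpa [Complex.norm_exp_ofReal_mul_I, abs_of_nonneg (hI₀ r hr)] using hr
  rw [hpolar]
  exact (hI.prod isPreconnected_univ).image _ (by fun_prop)

theorem exists_tendsto_cobounded_of_bounded {E : Type*} [NormedAddCommGroup E] [NormedSpace ℂ E]
    [CompleteSpace E] {f : ℂ → E} {R M : ℝ} (hf : DifferentiableOn ℂ f {z | R < ‖z‖})
    (hb : ∀ z : ℂ, R < ‖z‖ → ‖f z‖ ≤ M) : ∃ L, Tendsto f (Bornology.cobounded ℂ) (𝓝 L) := by
  have hev : ∀ᶠ w in 𝓝[≠] (0 : ℂ), R < ‖w⁻¹‖ :=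
    tendsto_inv₀_nhdsNE_zero.eventually
      ((tendsto_norm_cobounded_atTop (E := ℂ)).eventually_gt_atTop R)
  have hd : ∀ᶠ w in 𝓝[≠] (0 : ℂ), DifferentiableAt ℂ (fun w => f w⁻¹) w := by
    filter_upwards [hev, self_mem_nhdsWithin] with w hw hw₀
    exact (hf.differentiableAt ((isOpen_lt continuous_const continuous_norm).mem_nhds hw)).comp w
      (differentiableAt_inv hw₀)
  have hbdd : IsBoundedUnder (· ≤ ·) (𝓝[≠] (0 : ℂ)) fun w => ‖f w⁻¹ - f 0⁻¹‖ := by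
    refine isBoundedUnder_of_eventually_le (a := M + ‖f 0⁻¹‖) ?_
    filter_upwards [hev] with w hw
    linarith [norm_sub_le (f w⁻¹) (f 0⁻¹), hb _ hw]
  exact ⟨_, ((Complex.tendsto_limUnder_of_differentiable_on_punctured_nhds_of_bounded_under hd
    hbdd).comp tendsto_inv₀_cobounded').congr fun z => by simp⟩

section OuterSector

def outerSector (c : ℂ) (δ : ℝ) : Set ℂ :=
  (fun p : ℝ × ℝ => (p.1 : ℂ) * Complex.exp (p.2 * Complex.I) * c) '' (Ioo 1 (1 + δ) ×ˢ Ioo (-δ) δ)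

variable {c : ℂ}

theorem isPreconnected_outerSector (c : ℂ) (δ : ℝ) : IsPreconnected (outerSector c δ) :=
  ((convex_Ioo _ _).prod (convex_Ioo _ _)).isPreconnected.image _ (by fun_prop)

theorem outerSector_mono {δ δ' : ℝ} (h : δ ≤ δ') : outerSector c δ ⊆ outerSector c δ' :=
  image_mono (prod_mono (Ioo_subset_Ioo_right (by linarith)) (Ioo_subset_Ioo (neg_le_neg h) h))

theorem outerSector_subset (hc : ‖c‖ = 1) (δ : ℝ) :
    outerSector c δ ⊆ {z | ‖z‖ ∈ Ioo 1 (1 + δ)} := by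
  rintro _ ⟨⟨r, θ⟩, ⟨hr, -⟩, rfl⟩
  simpa [Complex.norm_exp_ofReal_mul_I, hc, abs_of_pos (one_pos.trans hr.1)] using hr

theorem outerSector_subset_ball (hc : ‖c‖ = 1) (δ : ℝ) : outerSector c δ ⊆ ball c (2 * δ) := by
  rintro _ ⟨⟨r, θ⟩, ⟨⟨hr₁, hr₂⟩, hθ₁, hθ₂⟩, rfl⟩
  set e := Complex.exp (θ * Complex.I)
  have hr : ‖((r : ℂ) - 1) * e‖ = r - 1 := by
    rw [norm_mul, Complex.norm_exp_ofReal_mul_I, mul_one, ← Complex.ofReal_one,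
      ← Complex.ofReal_sub, Complex.norm_real, Real.norm_eq_abs, abs_of_pos (by linarith)]
  have hθ : ‖e - 1‖ ≤ |θ| := by
    simpa [e, mul_comm] using Real.norm_exp_I_mul_ofReal_sub_one_le (x := θ)
  rw [mem_ball, dist_eq_norm]
  calc ‖(r : ℂ) * e * c - c‖ = ‖((r : ℂ) - 1) * e + (e - 1)‖ := by
        rw [show (r : ℂ) * e * c - c = (((r : ℂ) - 1) * e + (e - 1)) * c by ring, norm_mul, hc,
          mul_one]
    _ ≤ ‖((r : ℂ) - 1) * e‖ + ‖e - 1‖ := norm_add_le _ _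
    _ < 2 * δ := by linarith [abs_lt.2 ⟨hθ₁, hθ₂⟩]

theorem outerSector_mem_nhdsWithin (hc : ‖c‖ = 1) {δ : ℝ} (hδ : 0 < δ) :
    outerSector c δ ∈ 𝓝[{z : ℂ | 1 < ‖z‖}] c := by
  have hc₀ : c ≠ 0 := norm_ne_zero_iff.1 (hc ▸ one_ne_zero)
  have harg : Tendsto (fun z => Complex.arg (z / c)) (𝓝 c) (𝓝 0) := by
    have h := (Complex.continuousAt_arg (x := c / c) (by simp [div_self hc₀])).tendsto.comp
      (continuous_id.div_const c).continuousAt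
    simpa [Function.comp_def, div_self hc₀] using h
  have hnorm : Tendsto (fun z : ℂ => ‖z‖) (𝓝 c) (𝓝 1) := hc ▸ continuous_norm.continuousAt
  filter_upwards [self_mem_nhdsWithin,
    nhdsWithin_le_nhds (harg.eventually (Ioo_mem_nhds (neg_neg_of_pos hδ) hδ)),
    nhdsWithin_le_nhds (hnorm.eventually (gt_mem_nhds (lt_add_of_pos_right 1 hδ)))]
    with z hz₁ hθ hz₂
  refine ⟨(‖z‖, Complex.arg (z / c)), ⟨⟨hz₁, hz₂⟩, hθ⟩, ?_⟩
  have h := Complex.norm_mul_exp_arg_mul_I (z / c)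
  rw [norm_div, hc, div_one] at h
  simp only [h, div_mul_cancel₀ z hc₀]

theorem hasAntitoneBasis_outerSector (hc : ‖c‖ = 1) {ρ : ℝ} (hρ : 0 < ρ) :
    (𝓝[{z : ℂ | 1 < ‖z‖}] c).HasAntitoneBasis fun n : ℕ => outerSector c (ρ / (n + 1)) where
  toHasBasis := by
    refine Metric.nhdsWithin_basis_ball.to_hasBasis' (fun ε hε => ?_)
      fun n _ => outerSector_mem_nhdsWithin hc (by positivity)
    obtain ⟨n, hn⟩ := exists_nat_gt (2 * ρ / ε)
    refine ⟨n, trivial, fun z hz => ⟨ball_subset_ball ?_ (outerSector_subset_ball hc _ hz),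
      (outerSector_subset hc _ hz).1⟩⟩
    rw [div_lt_iff₀ hε] at hn
    rw [mul_div_assoc', div_le_iff₀ (by positivity)]
    nlinarith
  antitone _ _ h := outerSector_mono (div_le_div_of_nonneg_left hρ.le (by positivity)
    (by exact_mod_cast Nat.add_le_add_right h 1))

end OuterSector

theorem impression_eq_iInter_closure {Ψ : ℂ → ℂ} {α : AddCircle (1 : ℝ)} {B : ℕ → Set ℂ}
    (hB : (𝓝[{z : ℂ | 1 < ‖z‖}] circlePoint α).HasAntitoneBasis B)
    (hBU : ∀ n, B n ⊆ {z | 1 < ‖z‖}) : impression Ψ α = ⋂ n, closure (Ψ '' B n) := by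
  ext w
  refine ⟨fun ⟨z, hz, hzc, hzw⟩ => mem_iInter.2 fun n => ?_, fun hw => ?_⟩
  · have hzB : ∀ᶠ k in atTop, z k ∈ B n :=
      tendsto_nhdsWithin_iff.2 ⟨hzc, Eventually.of_forall hz⟩ (hB.mem n)
    exact mem_closure_of_tendsto hzw (hzB.mono fun k hk => mem_image_of_mem Ψ hk)
  · have hsel : ∀ n : ℕ, ∃ z ∈ B n, dist (Ψ z) w < 1 / (n + 1) := fun n => by
      obtain ⟨_, ⟨z, hz, rfl⟩, hzw⟩ :=
        Metric.mem_closure_iff.1 (mem_iInter.1 hw n) _ Nat.one_div_pos_of_nat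
      exact ⟨z, hz, by rwa [dist_comm]⟩
    choose z hzB hzw using hsel
    refine ⟨z, fun n => hBU n (hzB n), (hB.tendsto hzB).mono_right nhdsWithin_le_nhds, ?_⟩
    exact tendsto_iff_dist_tendsto_zero.2 (squeeze_zero (fun _ => dist_nonneg)
      (fun n => (hzw n).le) tendsto_one_div_add_atTop_nhds_zero_nat)

section RiemannMap

variable {Q : Set ℂ} {Ψ : ℂ → ℂ}

theorem norm_circlePoint (α : AddCircle (1 : ℝ)) : ‖circlePoint α‖ = 1 := Circle.norm_coe _

theorem isOpen_basin (hQ : IsClosed Q) : IsOpen (basin Q) := by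
  refine isOpen_iff_mem_nhds.2 fun z hz => ?_
  filter_upwards [hQ.isOpen_compl.connectedComponentIn.mem_nhds (mem_connectedComponentIn hz.1)]
    with y hy
  exact ⟨connectedComponentIn_subset _ _ hy, connectedComponentIn_eq hy ▸ hz.2⟩

theorem Unshielded.eq_closure_diff_basin (hQ : Unshielded Q) :
    Q = closure (basin Q) \ basin Q :=
  hQ.2.2.trans (by rw [frontier, (isOpen_basin hQ.1.isClosed).interior_eq])

theorem setOf_lt_norm_subset_basin {M : ℝ} (hM : 0 ≤ M) (hQM : ∀ q ∈ Q, ‖q‖ ≤ M) :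
    {z : ℂ | M < ‖z‖} ⊆ basin Q := by
  intro z hz
  have hfar : {w : ℂ | M < ‖w‖} ⊆ Qᶜ := fun w hw hwQ => (hQM w hwQ).not_gt hw
  refine ⟨hfar hz, fun hbdd => ?_⟩
  obtain ⟨R, hR⟩ := (hbdd.subset ((isPreconnected_setOf_norm_mem isPreconnected_Ioi
    fun r hr => hM.trans (le_of_lt hr)).subset_connectedComponentIn hz hfar)).exists_norm_le
  have ht : ‖((max R M + 1 : ℝ) : ℂ)‖ = max R M + 1 := by
    rw [Complex.norm_real, Real.norm_eq_abs, abs_of_pos (by linarith [le_max_right R M])]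
  have hw := hR _ (show M < ‖((max R M + 1 : ℝ) : ℂ)‖ by rw [ht]; linarith [le_max_right R M])
  rw [ht] at hw
  linarith [le_max_left R M]

theorem RiemannMap.isOpen_image (hΨ : RiemannMap Q Ψ) {s : Set ℂ} (hs : s ⊆ {z | 1 < ‖z‖})
    (hso : IsOpen s) : IsOpen (Ψ '' s) := by
  refine ((hΨ.1.analyticOnNhd (isOpen_lt continuous_const continuous_norm)).is_constant_or_isOpen
    (isPreconnected_setOf_norm_mem isPreconnected_Ioi fun r hr => zero_le_one.trans (le_of_lt hr))
    ).resolve_left ?_ s hs hso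
  rintro ⟨w, hw⟩
  have h₂ : (2 : ℂ) ∈ {z : ℂ | 1 < ‖z‖} := by norm_num
  have h₃ : (3 : ℂ) ∈ {z : ℂ | 1 < ‖z‖} := by norm_num
  exact absurd (hΨ.2.injOn h₂ h₃ ((hw 2 h₂).trans (hw 3 h₃).symm)) (by norm_num)

theorem RiemannMap.tendsto_of_tendsto_comp (hΨ : RiemannMap Q Ψ) {ι : Type*} {l : Filter ι}
    {z : ι → ℂ} (hz : ∀ i, 1 < ‖z i‖) {ζ : ℂ} (hζ : 1 < ‖ζ‖)
    (h : Tendsto (fun i => Ψ (z i)) l (𝓝 (Ψ ζ))) : Tendsto z l (𝓝 ζ) := by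
  refine tendsto_nhds.2 fun V hV hζV => ?_
  have hopen : IsOpen (Ψ '' (V ∩ {z | 1 < ‖z‖})) :=
    hΨ.isOpen_image inter_subset_right (hV.inter (isOpen_lt continuous_const continuous_norm))
  filter_upwards [h.eventually (hopen.mem_nhds ⟨ζ, ⟨hζV, hζ⟩, rfl⟩)] with i ⟨w, ⟨hwV, hw⟩, hwz⟩
  exact show z i ∈ V from hΨ.2.injOn hw (hz i) hwz ▸ hwV

theorem RiemannMap.isCompact_preimage (hΨ : RiemannMap Q Ψ) {S : Set ℂ} (hS : IsCompact S)
    (hSQ : S ⊆ basin Q) : IsCompact {z : ℂ | 1 < ‖z‖ ∧ Ψ z ∈ S} := by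
  refine IsSeqCompact.isCompact fun z hz => ?_
  obtain ⟨w, hwS, φ, hφ, hw⟩ := hS.tendsto_subseq fun n => (hz n).2
  obtain ⟨ζ, hζ, rfl⟩ := hΨ.2.surjOn (hSQ hwS)
  exact ⟨ζ, ⟨hζ, hwS⟩, φ, hφ, hΨ.tendsto_of_tendsto_comp (fun n => (hz (φ n)).1) hζ hw⟩

theorem RiemannMap.impression_subset (hQ : Unshielded Q) (hΨ : RiemannMap Q Ψ)
    (α : AddCircle (1 : ℝ)) : impression Ψ α ⊆ Q := by
  rintro w ⟨z, hz, hzc, hzw⟩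
  rw [hQ.eq_closure_diff_basin]
  refine ⟨mem_closure_of_tendsto hzw (Eventually.of_forall fun n => hΨ.2.mapsTo (hz n)), ?_⟩
  rintro hw
  obtain ⟨ζ, hζ, rfl⟩ := hΨ.2.surjOn hw
  have hcζ := tendsto_nhds_unique hzc (hΨ.tendsto_of_tendsto_comp hz hζ hzw)
  exact hζ.ne' (hcζ ▸ norm_circlePoint α)

theorem exists_sphere_subset_basin (hQ : Bornology.IsBounded Q) :
    ∃ M, (∀ q ∈ Q, ‖q‖ < M) ∧ sphere (0 : ℂ) M ⊆ basin Q := by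
  obtain ⟨M₀, hM₀⟩ := hQ.exists_norm_le
  refine ⟨max M₀ 0 + 1, fun q hq => by linarith [hM₀ q hq, le_max_left M₀ 0], fun w hw => ?_⟩
  exact setOf_lt_norm_subset_basin (le_max_right M₀ 0)
    (fun q hq => (hM₀ q hq).trans (le_max_left _ _))
    (show max M₀ 0 < ‖w‖ from (mem_sphere_zero_iff_norm.1 hw).symm ▸ lt_add_one _)

theorem RiemannMap.exists_bounds_of_norm_eq (hΨ : RiemannMap Q Ψ) {M : ℝ}
    (hM : sphere (0 : ℂ) M ⊆ basin Q) :
    ∃ a > 1, ∃ R, ∀ z : ℂ, 1 < ‖z‖ → ‖Ψ z‖ = M → a ≤ ‖z‖ ∧ ‖z‖ ≤ R := by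
  have hlevel := hΨ.isCompact_preimage (isCompact_sphere 0 M) hM
  obtain ⟨a, ha₁, ha⟩ := hlevel.exists_forall_le' continuous_norm.continuousOn fun z hz => hz.1
  obtain ⟨R, hR⟩ := hlevel.isBounded.exists_norm_le
  exact ⟨a, ha₁, R, fun z hz hzM => ⟨ha z ⟨hz, mem_sphere_zero_iff_norm.2 hzM⟩,
    hR z ⟨hz, mem_sphere_zero_iff_norm.2 hzM⟩⟩⟩

theorem RiemannMap.mem_closure_image_setOf_le_norm (hQ : Unshielded Q) (hΨ : RiemannMap Q Ψ)
    {a M : ℝ} (ha : 1 < a) (hcollar : ∀ z : ℂ, 1 < ‖z‖ → ‖z‖ < a → M < ‖Ψ z‖) {q : ℂ}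
    (hq : q ∈ Q) (hqM : ‖q‖ < M) (r : ℝ) : q ∈ closure (Ψ '' {z | r ≤ ‖z‖}) := by
  rw [hQ.eq_closure_diff_basin, ← hΨ.2.image_eq] at hq
  obtain ⟨hqcl, hqb⟩ := hq
  have hCU : {z : ℂ | a ≤ ‖z‖ ∧ ‖z‖ ≤ r} ⊆ {z | 1 < ‖z‖} := fun z hz => ha.trans_le hz.1
  have hC : IsCompact {z : ℂ | a ≤ ‖z‖ ∧ ‖z‖ ≤ r} :=
    (isCompact_closedBall (0 : ℂ) r).of_isClosed_subset
      ((isClosed_le continuous_const continuous_norm).inter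
        (isClosed_le continuous_norm continuous_const))
      fun z hz => mem_closedBall_zero_iff.2 hz.2
  have hcover : {z : ℂ | 1 < ‖z‖} ⊆
      {z | 1 < ‖z‖ ∧ ‖z‖ < a} ∪ {z | a ≤ ‖z‖ ∧ ‖z‖ ≤ r} ∪ {z | r ≤ ‖z‖} := fun z hz => by
    by_cases h₁ : ‖z‖ < a
    · exact Or.inl (Or.inl ⟨hz, h₁⟩)
    by_cases h₂ : ‖z‖ ≤ r
    · exact Or.inl (Or.inr ⟨not_lt.1 h₁, h₂⟩)
    · exact Or.inr (le_of_lt (not_le.1 h₂))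
  have hq' := closure_mono (image_mono hcover) hqcl
  rw [image_union, image_union, closure_union, closure_union,
    (hC.image_of_continuousOn (hΨ.1.continuousOn.mono hCU)).isClosed.closure_eq] at hq'
  rcases hq' with (hA | ⟨z, hz, rfl⟩) | hF
  · refine absurd (closure_minimal ?_ (isClosed_le continuous_const continuous_norm) hA)
      hqM.not_ge
    rintro _ ⟨z, hz, rfl⟩
    exact le_of_lt (hcollar z hz.1 hz.2)
  · exact absurd ⟨z, hCU hz, rfl⟩ hqb
  · exact hF

/-- Since `Ψ` is proper, the collar `1 < ‖z‖ < a` and the far region `r < ‖z‖` each miss a level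
set of `‖Ψ‖` and so map to one side of it. If the collar mapped outside, every point of `Q` would
be a limit of `Ψ` at `∞`, where `Ψ` has a removable singularity; so `Q` would be a single point. -/
theorem RiemannMap.exists_bound_near_circle (hQ : Unshielded Q) (hΨ : RiemannMap Q Ψ)
    (hQ₂ : Q.Nontrivial) : ∃ ρ > 0, ∃ M, ∀ z : ℂ, 1 < ‖z‖ → ‖z‖ < 1 + ρ → ‖Ψ z‖ ≤ M := by
  have hcont : ContinuousOn (fun z => ‖Ψ z‖) {z : ℂ | 1 < ‖z‖} :=
    continuous_norm.comp_continuousOn hΨ.1.continuousOn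
  obtain ⟨M, hQM, hsphere⟩ := exists_sphere_subset_basin hQ.1.isBounded
  obtain ⟨a, ha₁, R, hne⟩ := hΨ.exists_bounds_of_norm_eq hsphere
  refine ⟨a - 1, sub_pos.2 ha₁, M, ?_⟩
  rcases (isPreconnected_setOf_norm_mem isPreconnected_Ioo fun r hr => zero_le_one.trans
    (le_of_lt hr.1)).image_subset_Iio_or_Ioi (hcont.mono fun z hz => hz.1)
    (fun z hz hzM => (hne z hz.1 hzM).1.not_gt hz.2) with hin | hout
  · exact fun z hz₁ hz₂ => (hin ⟨z, ⟨hz₁, by linarith⟩, rfl⟩).le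
  exfalso
  have hcluster : ∀ q ∈ Q, ∀ r, q ∈ closure (Ψ '' {z | r ≤ ‖z‖}) := fun q hq =>
    hΨ.mem_closure_image_setOf_le_norm hQ ha₁ (fun z h₁ h₂ => hout ⟨z, ⟨h₁, h₂⟩, rfl⟩) hq
      (hQM q hq)
  obtain ⟨q₁, hq₁, q₂, hq₂, hq₁₂⟩ := hQ₂
  set r := max R 1
  have hfar : {z : ℂ | ‖z‖ ∈ Ioi r} ⊆ {z | 1 < ‖z‖} := fun z hz =>
    (le_max_right R 1).trans_lt hz
  have hbdd : ∀ z : ℂ, r < ‖z‖ → ‖Ψ z‖ ≤ M := by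
    rcases (isPreconnected_setOf_norm_mem isPreconnected_Ioi fun s hs => zero_le_one.trans
      ((le_max_right R 1).trans (le_of_lt hs))).image_subset_Iio_or_Ioi (hcont.mono hfar)
      (fun z hz hzM => (hne z (hfar hz) hzM).2.not_gt ((le_max_left R 1).trans_lt hz))
      with hin | hout'
    · exact fun z hz => (hin ⟨z, hz, rfl⟩).le
    obtain ⟨_, hw, z, hz, rfl⟩ := mem_closure_iff.1 (hcluster q₁ hq₁ (r + 1)) (ball 0 M)
      isOpen_ball (mem_ball_zero_iff.2 (hQM q₁ hq₁))
    exact absurd (hout' ⟨z, show r < ‖z‖ by linarith [show r + 1 ≤ ‖z‖ from hz], rfl⟩)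
      (not_lt.2 (le_of_lt (mem_ball_zero_iff.1 hw)))
  obtain ⟨L, hL⟩ := exists_tendsto_cobounded_of_bounded (hΨ.1.mono fun z hz => hfar hz) hbdd
  have hlim : ∀ q ∈ Q, q = L := fun q hq => eq_of_nhds_neBot
    (((hasBasis_cobounded_norm.map Ψ).clusterPt_iff_forall_mem_closure.2
      fun s _ => hcluster q hq s).mono hL)
  exact hq₁₂ ((hlim q₁ hq₁).trans (hlim q₂ hq₂).symm)

theorem RiemannMap.isPreconnected_impression (hQ : Unshielded Q) (hΨ : RiemannMap Q Ψ)
    (α : AddCircle (1 : ℝ)) : IsPreconnected (impression Ψ α) := by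
  rcases Q.subsingleton_or_nontrivial with hsub | hnt
  · exact (hsub.anti (hΨ.impression_subset hQ α)).isPreconnected
  obtain ⟨ρ, hρ, M, hM⟩ := hΨ.exists_bound_near_circle hQ hnt
  have hB := hasAntitoneBasis_outerSector (norm_circlePoint α) hρ
  have hBρ : ∀ n : ℕ, outerSector (circlePoint α) (ρ / (n + 1)) ⊆ {z | ‖z‖ ∈ Ioo 1 (1 + ρ)} :=
    fun n z hz => by
      have hδ : ρ / (n + 1) ≤ ρ := div_le_self hρ.le (by linarith [n.cast_nonneg (α := ℝ)])
      have := outerSector_subset (norm_circlePoint α) _ hz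
      exact ⟨this.1, this.2.trans_le (by linarith)⟩
  rw [impression_eq_iInter_closure hB fun n z hz => (hBρ n hz).1]
  refine isPreconnected_iInter_of_directed
    (Antitone.directed_ge fun m n h => closure_mono (image_mono (hB.antitone h)))
    (fun n => (isCompact_closedBall (0 : ℂ) M).of_isClosed_subset isClosed_closure ?_)
    fun n => ((isPreconnected_outerSector _ _).image Ψ
      (hΨ.1.continuousOn.mono fun z hz => (hBρ n hz).1)).closure
  refine closure_minimal ?_ isClosed_closedBall
  rintro _ ⟨z, hz, rfl⟩
  exact mem_closedBall_zero_iff.2 (hM z (hBρ n hz).1 (hBρ n hz).2)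

end RiemannMap

/-- There is a finest upper semi-continuous partition of an unshielded continuum `Q`
whose elements are unions of impressions; moreover its elements are closed and
connected. -/
theorem exists_finest_usc_partition (Q : Set ℂ) (hQ : Unshielded Q)
    (Ψ : ℂ → ℂ) (hΨ : RiemannMap Q Ψ) :
    ∃ 𝒟 : Set (Set ℂ),
      IsUSCImpPartition Q Ψ 𝒟 ∧
      (∀ D ∈ 𝒟, IsClosed D ∧ IsConnected D) ∧
      ∀ 𝒟' : Set (Set ℂ), IsUSCImpPartition Q Ψ 𝒟' →
        ∀ D ∈ 𝒟, ∃ D' ∈ 𝒟', D ⊆ D' := by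
  refine ⟨finestPartition Q Ψ, ?_, fun D hD => ?_, fun 𝒟' h𝒟' => ?_⟩
  · exact isUSCImpPartition_finestPartition hQ.1 hQ.2.1.nonempty (hΨ.impression_subset hQ)
      (hΨ.isPreconnected_impression hQ)
  · exact ⟨isClosed_of_mem_finestPartition hQ.1.isClosed hD, isConnected_of_mem_finestPartition hD⟩
  · exact finestPartition_refines hQ.1.isClosed h𝒟'

end
end

section
/- Let Q be a continuum, Y a locally connected continuum, and m : Q → Y a monotone continuous surjection. If a ∈ Q satisfies m⁻¹(m(a)) = {a} (the fiber of m through a is the single point a), then Q is locally connected at a, i.e. every neighborhood of a contains a connected neighborhood of a. -/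
open Set Filter Topology Metric

/-!
Since `Q` is compact, `m` is a closed quotient map, so the neighbourhoods of `a` are exactly the
preimages of neighbourhoods of `m a` (the fiber being `{a}`). Shrinking such a neighbourhood of
`m a` to a closed connected one, its preimage is connected because the fibers of `m` are.
-/

theorem exists_isClosed_isConnected_mem_nhds_subset {X : Type*} [TopologicalSpace X]
    [RegularSpace X] [LocallyConnectedSpace X] {x : X} {s : Set X} (hs : s ∈ 𝓝 x) :
    ∃ t ∈ 𝓝 x, t ⊆ s ∧ IsClosed t ∧ IsConnected t := by
  obtain ⟨K, hK, hKclosed, hKs⟩ := exists_mem_nhds_isClosed_subset hs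
  obtain ⟨V, hVK, hVopen, hxV, hVconn⟩ :=
    locallyConnectedSpace_iff_subsets_isOpen_isConnected.mp ‹_› x K hK
  exact ⟨closure V, mem_of_superset (hVopen.mem_nhds hxV) subset_closure,
    (closure_minimal hVK hKclosed).trans hKs, isClosed_closure, hVconn.closure⟩

theorem IsClosedMap.comap_nhds_eq_of_preimage_eq_singleton {X Y : Type*} [TopologicalSpace X]
    [TopologicalSpace Y] {f : X → Y} (hf : IsClosedMap f) (hcont : Continuous f) {a : X}
    (ha : f ⁻¹' {f a} = {a}) : comap f (𝓝 (f a)) = 𝓝 a := by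
  rw [hf.comap_nhds_eq hcont, ha, nhdsSet_singleton]

theorem locally_connected_at_degenerate_fiber_general
    (Q : Type) [MetricSpace Q] [CompactSpace Q]
    (Y : Type) [MetricSpace Y]
    [LocallyConnectedSpace Y]
    (m : Q → Y) (hmc : Continuous m) (hms : Function.Surjective m)
    (hmono : ∀ y : Y, IsConnected (m ⁻¹' {y}))
    (a : Q) (ha : m ⁻¹' {m a} = {a}) :
    ∀ U ∈ 𝓝 a, ∃ V ∈ 𝓝 a, V ⊆ U ∧ IsConnected V := by
  intro U hU
  have hclosed : IsClosedMap m := hmc.isClosedMap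
  obtain ⟨W, hW, hWU⟩ : ∃ W ∈ 𝓝 (m a), m ⁻¹' W ⊆ U := by
    rwa [← mem_comap, hclosed.comap_nhds_eq_of_preimage_eq_singleton hmc ha]
  obtain ⟨K, hK, hKW, hKclosed, hKconn⟩ := exists_isClosed_isConnected_mem_nhds_subset hW
  refine ⟨m ⁻¹' K, hmc.continuousAt.preimage_mem_nhds hK, (preimage_mono hKW).trans hWU, ?_⟩
  exact (hclosed.isQuotientMap hmc hms).isCoinducing.isConnected_preimage_of_isClosed
    hmono hKclosed hKconn

/-- If `m : Q → Y` is a monotone continuous surjection of a continuum `Q` onto a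
locally connected continuum `Y` and the fiber of `m` through `a` is the single
point `a`, then `Q` is locally connected at `a`: every neighborhood of `a`
contains a connected neighborhood of `a`. -/
theorem locally_connected_at_degenerate_fiber
    (Q : Type) [MetricSpace Q] [CompactSpace Q] [ConnectedSpace Q]
    (Y : Type) [MetricSpace Y] [CompactSpace Y] [ConnectedSpace Y]
    [LocallyConnectedSpace Y]
    (m : Q → Y) (hmc : Continuous m) (hms : Function.Surjective m)
    (hmono : ∀ y : Y, IsConnected (m ⁻¹' {y}))
    (a : Q) (ha : m ⁻¹' {m a} = {a}) :
    ∀ U ∈ 𝓝 a, ∃ V ∈ 𝓝 a, V ⊆ U ∧ IsConnected V :=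
  locally_connected_at_degenerate_fiber_general Q Y m hmc hms hmono a ha
end
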